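/- Consider DANE+ with control variate h_{i,r} = ∇f_i(x^r) − ∇f(x^r), global update x^{r+1} = x_{i_r,r+1} for an arbitrary index sequence, f_i continuously differentiable with δ_B-BHD, and local solutions satisfying F_{i,r}(x_{i,r+1}) ≤ F_{i,r}(x^r) and ‖∇F_{i,r}(x_{i,r+1})‖ ≤ e_{r+1}. With λ = aδ_B for a > 1, after R rounds: min over 0 ≤ r ≤ R of ‖∇f(x^r)‖² ≤ (4(a+1)²/(a−1)) · δ_B(f(x^0) − f⋆)/R + (2/R) Σ_{r=1}^R e_r², where f⋆ := inf f. -/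

import Mathlib

/-!
The bounded Hessian dissimilarity makes `f̄ - fᵢ + ⟪·, h⟫` a function with a `δ_B`-Lipschitz
gradient that is stationary at `xʳ`, so by the descent lemma it grows by at most `δ_B/2 ‖x - xʳ‖²`;
added to the local decrease `F(x_{i,r+1}) ≤ F(xʳ)` this gives the sufficient decrease
`f̄(xʳ⁺¹) + (λ - δ_B)/2 ‖xʳ⁺¹ - xʳ‖² ≤ f̄(xʳ)`. Writing `∇f̄(xʳ⁺¹)` through `∇F` and the same
dissimilarity bound gives `‖∇f̄(xʳ⁺¹)‖ ≤ e_{r+1} + (λ + δ_B)‖xʳ⁺¹ - xʳ‖`. Squaring, telescoping the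
decrease and bounding the minimum by the average yields the rate.
-/

open Finset InnerProductSpace

variable {E : Type*} [NormedAddCommGroup E] [InnerProductSpace ℝ E] [CompleteSpace E]
  {f g : E → ℝ} {f' g' x : E}

theorem HasGradientAt.add (hf : HasGradientAt f f' x) (hg : HasGradientAt g g' x) :
    HasGradientAt (fun z => f z + g z) (f' + g') x := by
  rw [hasGradientAt_iff_hasFDerivAt] at *
  rw [map_add]
  exact hf.add hg

theorem HasGradientAt.sub (hf : HasGradientAt f f' x) (hg : HasGradientAt g g' x) :
    HasGradientAt (fun z => f z - g z) (f' - g') x := by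
  rw [hasGradientAt_iff_hasFDerivAt] at *
  rw [map_sub]
  exact hf.sub hg

theorem HasGradientAt.const_mul (c : ℝ) (hf : HasGradientAt f f' x) :
    HasGradientAt (fun z => c * f z) (c • f') x := by
  rw [hasGradientAt_iff_hasFDerivAt] at *
  rw [map_smul]
  exact hf.const_mul c

theorem hasGradientAt_inner_const (v x : E) : HasGradientAt (fun z => ⟪z, v⟫_ℝ) v x := by
  have h : (fun z => ⟪z, v⟫_ℝ) = toDual ℝ E v := by ext z; simp [real_inner_comm]
  rw [hasGradientAt_iff_hasFDerivAt, h]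
  exact (toDual ℝ E v).hasFDerivAt

theorem hasGradientAt_norm_sub_sq (c x : E) :
    HasGradientAt (fun z => ‖z - c‖ ^ 2) ((2 : ℝ) • (x - c)) x := by
  rw [hasGradientAt_iff_hasFDerivAt]
  refine (((hasFDerivAt_id x).sub_const c).norm_sq).congr_fderiv ?_
  ext z; simp

theorem le_add_inner_add_sq_of_gradient_lipschitz {φ : E → ℝ} {G : E → E} {L : ℝ}
    (hφ : ∀ z, HasGradientAt φ (G z) z) (hG : ∀ z w, ‖G z - G w‖ ≤ L * ‖z - w‖) (x y : E) :
    φ y ≤ φ x + ⟪G x, y - x⟫_ℝ + L / 2 * ‖y - x‖ ^ 2 := by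
  obtain ⟨d, rfl⟩ : ∃ d, y = x + d := ⟨y - x, by abel⟩
  rw [add_sub_cancel_left]
  have hline : ∀ t : ℝ, HasDerivAt (fun t : ℝ => φ (x + t • d) - t * ⟪G x, d⟫_ℝ)
      (⟪G (x + t • d), d⟫_ℝ - ⟪G x, d⟫_ℝ) t := by
    intro t
    have hc : HasDerivAt (fun t : ℝ => x + t • d) d t := by
      simpa using ((hasDerivAt_id t).smul_const d).const_add x
    have hφt := (hφ (x + t • d)).hasFDerivAt.comp_hasDerivAt t hc
    rw [toDual_apply_apply] at hφt
    exact hφt.sub (hasDerivAt_mul_const _)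
  have hbound : ∀ t : ℝ, HasDerivAt (fun t : ℝ => φ x + L / 2 * ‖d‖ ^ 2 * t ^ 2)
      (L * ‖d‖ ^ 2 * t) t := by
    intro t
    exact (((hasDerivAt_pow 2 t).const_mul _).const_add _).congr_deriv (by simp; ring)
  have hslope : ∀ t ∈ Set.Ico (0 : ℝ) 1,
      ⟪G (x + t • d), d⟫_ℝ - ⟪G x, d⟫_ℝ ≤ L * ‖d‖ ^ 2 * t := by
    intro t ht
    rw [← inner_sub_left]
    calc ⟪G (x + t • d) - G x, d⟫_ℝ ≤ ‖G (x + t • d) - G x‖ * ‖d‖ := real_inner_le_norm _ _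
      _ ≤ L * ‖x + t • d - x‖ * ‖d‖ := by gcongr; exact hG _ _
      _ = L * ‖d‖ ^ 2 * t := by
        rw [add_sub_cancel_left, norm_smul, Real.norm_of_nonneg ht.1]; ring
  have := image_le_of_deriv_right_le_deriv_boundary
    (fun t _ => (hline t).continuousAt.continuousWithinAt) (fun t _ => (hline t).hasDerivWithinAt)
    (by simp) (fun t _ => (hbound t).continuousAt.continuousWithinAt)
    (fun t _ => (hbound t).hasDerivWithinAt) hslope (Set.right_mem_Icc.2 zero_le_one)
  simp only [one_smul, one_mul, one_pow, mul_one] at this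
  linarith

def HasBoundedHessianDissimilarity (g gbar : E → ℝ) (δ : ℝ) : Prop :=
  ∀ z w, ‖(gradient g z - gradient gbar z) - (gradient g w - gradient gbar w)‖ ≤ δ * ‖z - w‖

/-- The local subproblem `F_{i,r}`, with `g = fᵢ`, `gbar = f̄` and `p = xʳ`. -/
noncomputable def localObjective (g gbar : E → ℝ) (lam : ℝ) (p : E) : E → ℝ := fun z =>
  g z - ⟪z, gradient g p - gradient gbar p⟫_ℝ + lam / 2 * ‖z - p‖ ^ 2

theorem hasGradientAt_localObjective {gbar : E → ℝ} {lam : ℝ} {p z : E}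
    (hg : DifferentiableAt ℝ g z) :
    HasGradientAt (localObjective g gbar lam p)
      (gradient g z - (gradient g p - gradient gbar p) + lam • (z - p)) z := by
  have h := (hg.hasGradientAt.sub (hasGradientAt_inner_const (gradient g p - gradient gbar p) z)).add
    ((hasGradientAt_norm_sub_sq p z).const_mul (lam / 2))
  rwa [smul_smul, div_mul_cancel₀ _ two_ne_zero] at h

theorem localObjective_sufficient_decrease {gbar : E → ℝ} {δ lam : ℝ} {p y : E}
    (hg : Differentiable ℝ g) (hgbar : Differentiable ℝ gbar)
    (hδ : HasBoundedHessianDissimilarity g gbar δ)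
    (hy : localObjective g gbar lam p y ≤ localObjective g gbar lam p p) :
    gbar y + (lam - δ) / 2 * ‖y - p‖ ^ 2 ≤ gbar p := by
  set v := gradient g p - gradient gbar p
  -- `gbar - g + ⟪·, v⟫` has a `δ`-Lipschitz gradient that vanishes at `p`
  have hgrad : ∀ z, HasGradientAt (fun z => gbar z - g z + ⟪z, v⟫_ℝ)
      (gradient gbar z - gradient g z + v) z := fun z =>
    ((hgbar z).hasGradientAt.sub (hg z).hasGradientAt).add (hasGradientAt_inner_const v z)
  have hlip : ∀ z w, ‖(gradient gbar z - gradient g z + v) - (gradient gbar w - gradient g w + v)‖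
      ≤ δ * ‖z - w‖ := fun z w => by
    rw [← norm_neg, show -((gradient gbar z - gradient g z + v) - (gradient gbar w - gradient g w + v))
      = (gradient g z - gradient gbar z) - (gradient g w - gradient gbar w) by abel]
    exact hδ z w
  have hdesc := le_add_inner_add_sq_of_gradient_lipschitz hgrad hlip p y
  have hv : gradient gbar p - gradient g p + v = 0 := by simp only [v]; abel
  simp only [localObjective, sub_self, norm_zero, hv, inner_zero_left] at hdesc hy
  linarith

theorem norm_gradient_le_of_localObjective {gbar : E → ℝ} {δ lam : ℝ} {p y : E}
    (hg : DifferentiableAt ℝ g y) (hlam : 0 ≤ lam) (hδ : HasBoundedHessianDissimilarity g gbar δ) :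
    ‖gradient gbar y‖ ≤ ‖gradient (localObjective g gbar lam p) y‖ + (lam + δ) * ‖y - p‖ := by
  rw [(hasGradientAt_localObjective hg).gradient]
  have hsplit : gradient gbar y = (gradient g y - (gradient g p - gradient gbar p) + lam • (y - p))
      - ((gradient g y - gradient gbar y) - (gradient g p - gradient gbar p)) - lam • (y - p) := by
    abel
  calc ‖gradient gbar y‖
      ≤ ‖gradient g y - (gradient g p - gradient gbar p) + lam • (y - p)‖
        + ‖(gradient g y - gradient gbar y) - (gradient g p - gradient gbar p)‖
        + ‖lam • (y - p)‖ := by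
          conv_lhs => rw [hsplit]
          exact (norm_sub_le _ _).trans (add_le_add_left (norm_sub_le _ _) _)
    _ ≤ _ := by
      rw [norm_smul, Real.norm_of_nonneg hlam]
      linarith [hδ y p]

theorem exists_sq_le_of_sufficient_decrease {u γ e D : ℕ → ℝ} {c K C ustar : ℝ} {R : ℕ}
    (hR : 1 ≤ R) (hC : 0 ≤ C) (hKC : 2 * K ^ 2 ≤ C * c)
    (hdec : ∀ r, u (r + 1) + c * D r ^ 2 ≤ u r)
    (hγ : ∀ r, γ (r + 1) ≤ e (r + 1) + K * D r) (hγ0 : ∀ r, 0 ≤ γ r) (hlow : ustar ≤ u R) :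
    ∃ r ≤ R, γ r ^ 2 ≤ C * (u 0 - ustar) / R + 2 / R * ∑ r ∈ Icc 1 R, e r ^ 2 := by
  have hshift : ∀ v : ℕ → ℝ, ∑ r ∈ Icc 1 R, v r = ∑ r ∈ range R, v (r + 1) := fun v => by
    rw [range_eq_Ico, sum_Ico_add', zero_add, Ico_add_one_right_eq_Icc]
  have hstep : ∀ r, γ (r + 1) ^ 2 ≤ 2 * e (r + 1) ^ 2 + C * (u r - u (r + 1)) := fun r => by
    have hsq : γ (r + 1) ^ 2 ≤ (e (r + 1) + K * D r) ^ 2 := pow_le_pow_left₀ (hγ0 _) (hγ r) 2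
    have hK : 2 * K ^ 2 * D r ^ 2 ≤ C * (c * D r ^ 2) := by
      nlinarith [mul_le_mul_of_nonneg_right hKC (sq_nonneg (D r))]
    have hc : C * (c * D r ^ 2) ≤ C * (u r - u (r + 1)) :=
      mul_le_mul_of_nonneg_left (by linarith [hdec r]) hC
    nlinarith [sq_nonneg (e (r + 1) - K * D r)]
  have hRpos : (0 : ℝ) < R := by exact_mod_cast hR
  have hsum : ∑ r ∈ Icc 1 R, γ r ^ 2
      ≤ ∑ _r ∈ Icc 1 R, (C * (u 0 - ustar) / R + 2 / R * ∑ r ∈ Icc 1 R, e r ^ 2) := by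
    rw [sum_const, Nat.card_Icc, add_tsub_cancel_right, nsmul_eq_mul,
      show (R : ℝ) * (C * (u 0 - ustar) / R + 2 / R * ∑ r ∈ Icc 1 R, e r ^ 2)
        = C * (u 0 - ustar) + 2 * ∑ r ∈ Icc 1 R, e r ^ 2 by field_simp]
    calc ∑ r ∈ Icc 1 R, γ r ^ 2 = ∑ r ∈ range R, γ (r + 1) ^ 2 := hshift _
      _ ≤ ∑ r ∈ range R, (2 * e (r + 1) ^ 2 + C * (u r - u (r + 1))) :=
        sum_le_sum fun r _ => hstep r
      _ = 2 * ∑ r ∈ Icc 1 R, e r ^ 2 + C * (u 0 - u R) := by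
        rw [sum_add_distrib, ← mul_sum, ← mul_sum, sum_range_sub', hshift]
      _ ≤ C * (u 0 - ustar) + 2 * ∑ r ∈ Icc 1 R, e r ^ 2 := by
        nlinarith [mul_le_mul_of_nonneg_left hlow hC]
  obtain ⟨r, hr, hle⟩ := exists_le_of_sum_le ⟨1, mem_Icc.2 ⟨le_rfl, hR⟩⟩ hsum
  exact ⟨r, (mem_Icc.1 hr).2, hle⟩

theorem stmt_9_general {d n : ℕ} (f : Fin n → EuclideanSpace ℝ (Fin d) → ℝ)
    (hf : ∀ i, ContDiff ℝ 1 (f i)) (δB a lam : ℝ) (hδ : 0 ≤ δB) (ha : 1 < a)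
    (hlam : lam = a * δB)
    (fbar : EuclideanSpace ℝ (Fin d) → ℝ)
    (hfbar : fbar = fun x => (1 / (n : ℝ)) * ∑ i, f i x)
    (hBHD : ∀ i, ∀ x y,
      ‖(gradient (f i) x - gradient fbar x) - (gradient (f i) y - gradient fbar y)‖
        ≤ δB * ‖x - y‖)
    (x : ℕ → EuclideanSpace ℝ (Fin d))
    (xl : Fin n → ℕ → EuclideanSpace ℝ (Fin d))
    (idx : ℕ → Fin n)
    (hupd : ∀ r : ℕ, x (r + 1) = xl (idx r) (r + 1))
    (F : Fin n → ℕ → EuclideanSpace ℝ (Fin d) → ℝ)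
    (hFdef : ∀ i r, F i r = fun z => f i z
        - (inner ℝ z (gradient (f i) (x r) - gradient fbar (x r)) : ℝ)
        + lam / 2 * ‖z - x r‖ ^ 2)
    (e : ℕ → ℝ)
    (hdec : ∀ i r, F i r (xl i (r + 1)) ≤ F i r (x r))
    (hgrad : ∀ i r, ‖gradient (F i r) (xl i (r + 1))‖ ≤ e (r + 1))
    (hbdd : BddBelow (Set.range fbar))
    (fstar : ℝ) (hfstar : fstar = ⨅ y, fbar y)
    (R : ℕ) (hR : 1 ≤ R) :
    ∃ r ≤ R, ‖gradient fbar (x r)‖ ^ 2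
      ≤ 4 * (a + 1) ^ 2 / (a - 1) * (δB * (fbar (x 0) - fstar)) / R
        + 2 / R * ∑ r ∈ Finset.Icc 1 R, e r ^ 2 := by
  have hdf : ∀ i, Differentiable ℝ (f i) := fun i => (hf i).differentiable one_ne_zero
  have hdfbar : Differentiable ℝ fbar := hfbar ▸ (Differentiable.fun_sum fun i _ => hdf i).const_mul _
  have hF : ∀ i r, F i r = localObjective (f i) fbar lam (x r) := hFdef
  have hlam0 : 0 ≤ lam := hlam ▸ mul_nonneg (by linarith) hδ
  have hC : 0 ≤ 4 * (a + 1) ^ 2 / (a - 1) * δB := by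
    have : 0 < a - 1 := by linarith
    positivity
  have hKC : 2 * (lam + δB) ^ 2 ≤ 4 * (a + 1) ^ 2 / (a - 1) * δB * ((lam - δB) / 2) := by
    refine le_of_eq ?_
    rw [hlam]
    field_simp [show a - 1 ≠ 0 by linarith]
    ring
  have hdesc : ∀ r, fbar (x (r + 1)) + (lam - δB) / 2 * ‖x (r + 1) - x r‖ ^ 2 ≤ fbar (x r) :=
    fun r => by
      rw [hupd r]
      exact localObjective_sufficient_decrease (hdf _) hdfbar (hBHD _) (hF _ r ▸ hdec _ r)
  have hstep : ∀ r, ‖gradient fbar (x (r + 1))‖ ≤ e (r + 1) + (lam + δB) * ‖x (r + 1) - x r‖ :=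
    fun r => by
      rw [hupd r]
      refine (norm_gradient_le_of_localObjective (p := x r) (hdf _ _) hlam0 (hBHD (idx r))).trans ?_
      gcongr
      exact hF _ r ▸ hgrad _ r
  have hlow : fstar ≤ fbar (x R) := hfstar ▸ ciInf_le hbdd (x R)
  simpa only [mul_assoc] using
    exists_sq_le_of_sufficient_decrease (u := fun r => fbar (x r))
      (γ := fun r => ‖gradient fbar (x r)‖) hR hC hKC hdesc hstep (fun r => norm_nonneg _) hlow

theorem stmt_9 {d n : ℕ} (hn : 0 < n) (f : Fin n → EuclideanSpace ℝ (Fin d) → ℝ)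
    (hf : ∀ i, ContDiff ℝ 1 (f i)) (δB a lam : ℝ) (hδ : 0 ≤ δB) (ha : 1 < a)
    (hlam : lam = a * δB)
    (fbar : EuclideanSpace ℝ (Fin d) → ℝ)
    (hfbar : fbar = fun x => (1 / (n : ℝ)) * ∑ i, f i x)
    (hBHD : ∀ i, ∀ x y,
      ‖(gradient (f i) x - gradient fbar x) - (gradient (f i) y - gradient fbar y)‖
        ≤ δB * ‖x - y‖)
    (x : ℕ → EuclideanSpace ℝ (Fin d))
    (xl : Fin n → ℕ → EuclideanSpace ℝ (Fin d))
    (idx : ℕ → Fin n)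
    (hupd : ∀ r : ℕ, x (r + 1) = xl (idx r) (r + 1))
    (F : Fin n → ℕ → EuclideanSpace ℝ (Fin d) → ℝ)
    (hFdef : ∀ i r, F i r = fun z => f i z
        - (inner ℝ z (gradient (f i) (x r) - gradient fbar (x r)) : ℝ)
        + lam / 2 * ‖z - x r‖ ^ 2)
    (e : ℕ → ℝ) (he : ∀ r, 0 ≤ e r)
    (hdec : ∀ i r, F i r (xl i (r + 1)) ≤ F i r (x r))
    (hgrad : ∀ i r, ‖gradient (F i r) (xl i (r + 1))‖ ≤ e (r + 1))
    (hbdd : BddBelow (Set.range fbar))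
    (fstar : ℝ) (hfstar : fstar = ⨅ y, fbar y)
    (R : ℕ) (hR : 1 ≤ R) :
    ∃ r ≤ R, ‖gradient fbar (x r)‖ ^ 2
      ≤ 4 * (a + 1) ^ 2 / (a - 1) * (δB * (fbar (x 0) - fstar)) / R
        + 2 / R * ∑ r ∈ Finset.Icc 1 R, e r ^ 2 :=
  stmt_9_general f hf δB a lam hδ ha hlam fbar hfbar hBHD x xl idx hupd F hFdef e hdec hgrad hbdd
    fstar hfstar R hR
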